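/- arXiv:2111.04183 — 3 statements merged into one kernel-verified Lean document; each statement's English description precedes it below -/
import Mathlib

section
/- For a ∈ (-π/2, π/2) and b ∈ ℝ, one has Re(e^{ia}/(1+ib)) ≤ cos²(a/2), with equality if and only if Arg(1+ib) = a/2. -/
open Complex Real

/-- for `a ∈ (-π/2, π/2)` and real `b`,
`Re(e^{ia}/(1+ib)) ≤ cos²(a/2)`, with equality iff `Arg(1+ib) = a/2`. -/
theorem stmt2 (a b : ℝ) (ha : a ∈ Set.Ioo (-(Real.pi / 2)) (Real.pi / 2)) :
    (Complex.exp (a * Complex.I) / (1 + b * Complex.I)).re ≤ Real.cos (a / 2) ^ 2 ∧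
    ((Complex.exp (a * Complex.I) / (1 + b * Complex.I)).re = Real.cos (a / 2) ^ 2 ↔
      Complex.arg (1 + b * Complex.I) = a / 2) := by
  obtain ⟨ha1, ha2⟩ := ha
  have hre : (Complex.exp (a * Complex.I) / (1 + b * Complex.I)).re
      = (Real.cos a + b * Real.sin a) / (1 + b ^ 2) := by
    rw [Complex.div_re]
    have h1 : (Complex.exp (a * Complex.I)).re = Real.cos a := by
      rw [Complex.exp_mul_I]; simp [Complex.cos_ofReal_re, Complex.sin_ofReal_im]
    have h2 : (Complex.exp (a * Complex.I)).im = Real.sin a := by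
      rw [Complex.exp_mul_I]; simp [Complex.cos_ofReal_im, Complex.sin_ofReal_re]
    have h3 : (1 + (b : ℂ) * Complex.I).re = 1 := by simp
    have h4 : (1 + (b : ℂ) * Complex.I).im = b := by simp
    have h5 : Complex.normSq (1 + (b : ℂ) * Complex.I) = 1 + b ^ 2 := by
      rw [Complex.normSq_apply, h3, h4]; ring
    rw [h1, h2, h3, h4, h5]; ring
  have hb2 : (0:ℝ) < 1 + b ^ 2 := by positivity
  have hcos : Real.cos a = 2 * Real.cos (a / 2) ^ 2 - 1 := by
    have := Real.cos_sq (a / 2)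
    have h2 : 2 * (a / 2) = a := by ring
    rw [h2] at this
    linarith
  have hsin : Real.sin a = 2 * Real.sin (a / 2) * Real.cos (a / 2) := by
    have := Real.sin_two_mul (a / 2)
    rw [← this]; ring_nf
  have hpyth := Real.sin_sq_add_cos_sq (a / 2)
  -- key identity: cos²(a/2)(1+b²) - (cos a + b sin a) = (b cos(a/2) - sin(a/2))²
  have key : Real.cos (a / 2) ^ 2 * (1 + b ^ 2) - (Real.cos a + b * Real.sin a)
      = (b * Real.cos (a / 2) - Real.sin (a / 2)) ^ 2 := by
    rw [hcos, hsin]; nlinarith [hpyth]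
  have hineq : (Real.cos a + b * Real.sin a) / (1 + b ^ 2) ≤ Real.cos (a / 2) ^ 2 := by
    rw [div_le_iff₀ hb2]
    nlinarith [sq_nonneg (b * Real.cos (a / 2) - Real.sin (a / 2))]
  have hcoshalf : 0 < Real.cos (a / 2) := by
    apply Real.cos_pos_of_mem_Ioo
    constructor <;> [linarith; linarith]
  -- equality ↔ b cos(a/2) = sin(a/2) ↔ b = tan(a/2)
  have heq : (Real.cos a + b * Real.sin a) / (1 + b ^ 2) = Real.cos (a / 2) ^ 2
      ↔ b = Real.tan (a / 2) := by
    rw [div_eq_iff hb2.ne', Real.tan_eq_sin_div_cos, eq_div_iff hcoshalf.ne']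
    constructor
    · intro h
      nlinarith [key, sq_nonneg (b * Real.cos (a / 2) - Real.sin (a / 2))]
    · intro h; nlinarith [key]
  have harg : Complex.arg (1 + b * Complex.I) = Real.arctan b := by
    have hre' : (0:ℝ) < (1 + (b : ℂ) * Complex.I).re := by simp
    have habs : |Complex.arg (1 + b * Complex.I)| < Real.pi / 2 :=
      Complex.abs_arg_lt_pi_div_two_iff.2 (Or.inl hre')
    have htan := Complex.tan_arg (1 + b * Complex.I)
    have h4 : (1 + (b : ℂ) * Complex.I).im = b := by simp
    have h3 : (1 + (b : ℂ) * Complex.I).re = 1 := by simp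
    rw [h3, h4, div_one] at htan
    rw [abs_lt] at habs
    have h5 := Real.arctan_tan habs.1 habs.2
    rw [htan] at h5
    exact h5.symm
  have harctan : Real.arctan b = a / 2 ↔ b = Real.tan (a / 2) := by
    constructor
    · intro h; rw [← h, Real.tan_arctan]
    · intro h; rw [h]; exact Real.arctan_tan (by linarith) (by linarith)
  rw [hre, harg, harctan]
  exact ⟨hineq, heq⟩
end

section
/- For every positive integer n, Σ_{m ≥ 1} 1/(m²(m+n)²) = π²/(3n²) - H_n^{(2)}/n² - 2H_n/n³, where H_n = Σ_{k=1}^n 1/k and H_n^{(2)} = Σ_{k=1}^n 1/k². -/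
open Finset

/-- Basel series shifted by one: `∑ 1/(m+1)² = π²/6`. -/
lemma aux_ha : HasSum (fun m : ℕ => (1 : ℝ) / ((m : ℝ) + 1) ^ 2) (Real.pi ^ 2 / 6) := by
  have h := (hasSum_nat_add_iff' (f := fun m : ℕ => (1 : ℝ) / (m : ℝ) ^ 2) 1).mpr hasSum_zeta_two
  simp only [Finset.sum_range_one, Nat.cast_zero] at h
  norm_num at h
  convert h using 2 with m
  · exact rfl
  ring

/-- Telescoping: `∑_m (1/(m+1+j) - 1/(m+2+j)) = 1/(j+1)`. -/
lemma aux_tel (j : ℕ) :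
    HasSum (fun m : ℕ => (1 : ℝ) / ((m : ℝ) + 1 + j) - 1 / ((m : ℝ) + 2 + j))
      (1 / ((j : ℝ) + 1)) := by
  rw [hasSum_iff_tendsto_nat_of_nonneg]
  · have hsum : ∀ N : ℕ, ∑ m ∈ range N, ((1 : ℝ) / ((m : ℝ) + 1 + j) - 1 / ((m : ℝ) + 2 + j))
        = 1 / ((j : ℝ) + 1) - 1 / ((N : ℝ) + 1 + j) := by
      intro N
      calc ∑ m ∈ range N, ((1 : ℝ) / ((m : ℝ) + 1 + j) - 1 / ((m : ℝ) + 2 + j))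
          = ∑ m ∈ range N, ((fun i : ℕ => (1 : ℝ) / ((i : ℝ) + 1 + j)) m
              - (fun i : ℕ => (1 : ℝ) / ((i : ℝ) + 1 + j)) (m + 1)) :=
            Finset.sum_congr rfl fun m _ => by push_cast; ring_nf
        _ = (1 : ℝ) / ((0 : ℕ) + 1 + j) - 1 / ((N : ℝ) + 1 + j) := Finset.sum_range_sub' _ N
        _ = 1 / ((j : ℝ) + 1) - 1 / ((N : ℝ) + 1 + j) := by norm_num [add_comm]
    simp only [hsum]
    have h0 : Filter.Tendsto (fun N : ℕ => ((N : ℝ) + 1 + j)⁻¹) Filter.atTop (nhds 0) :=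
      tendsto_inv_atTop_zero.comp (Filter.tendsto_atTop_add_const_right _ _
        (Filter.tendsto_atTop_add_const_right _ _ tendsto_natCast_atTop_atTop))
    simp only [one_div]
    simpa using Filter.Tendsto.sub
      (tendsto_const_nhds (x := (((j : ℝ) + 1))⁻¹) (f := Filter.atTop (α := ℕ))) h0
  · intro m
    have h1 : (0 : ℝ) < (m : ℝ) + 1 + j := by positivity
    rw [sub_nonneg]
    exact one_div_le_one_div_of_le h1 (by linarith)

/-- `∑_{m ≥ 1} 1/(m²(m+n)²) = π²/(3n²) - H_n^{(2)}/n² - 2H_n/n³`. -/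
theorem stmt6 (n : ℕ) (hn : 0 < n) :
    ∑' m : ℕ, (1 : ℝ) / (((m : ℝ) + 1) ^ 2 * (((m : ℝ) + 1) + n) ^ 2)
      = Real.pi ^ 2 / (3 * (n : ℝ) ^ 2)
        - (∑ k ∈ Finset.range n, (1 : ℝ) / ((k : ℝ) + 1) ^ 2) / (n : ℝ) ^ 2
        - 2 * (∑ k ∈ Finset.range n, (1 : ℝ) / ((k : ℝ) + 1)) / (n : ℝ) ^ 3 := by
  have hn' : (0 : ℝ) < n := by exact_mod_cast hn
  -- shifted Basel series
  have hb : HasSum (fun m : ℕ => (1 : ℝ) / ((m : ℝ) + 1 + n) ^ 2)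
      (Real.pi ^ 2 / 6 - ∑ k ∈ range n, (1 : ℝ) / ((k : ℝ) + 1) ^ 2) := by
    have h := (hasSum_nat_add_iff' (f := fun m : ℕ => (1 : ℝ) / ((m : ℝ) + 1) ^ 2) n).mpr aux_ha
    convert h using 2 with m
    · exact rfl
    push_cast
    ring
  -- harmonic telescoping sum
  have hC : HasSum (fun m : ℕ => (1 : ℝ) / ((m : ℝ) + 1) - 1 / ((m : ℝ) + 1 + n))
      (∑ j ∈ range n, (1 : ℝ) / ((j : ℝ) + 1)) := by
    have h := hasSum_sum (s := range n)
      (f := fun (j : ℕ) (m : ℕ) => (1 : ℝ) / ((m : ℝ) + 1 + j) - 1 / ((m : ℝ) + 2 + j))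
      (a := fun (j : ℕ) => 1 / ((j : ℝ) + 1)) (fun j _ => aux_tel j)
    convert h using 2 with m
    rw [eq_comm]
    calc ∑ j ∈ range n, ((1 : ℝ) / ((m : ℝ) + 1 + j) - 1 / ((m : ℝ) + 2 + j))
        = ∑ j ∈ range n, ((fun i : ℕ => (1 : ℝ) / ((m : ℝ) + 1 + i)) j
            - (fun i : ℕ => (1 : ℝ) / ((m : ℝ) + 1 + i)) (j + 1)) :=
          Finset.sum_congr rfl fun j _ => by push_cast; ring_nf
      _ = (1 : ℝ) / ((m : ℝ) + 1 + (0 : ℕ)) - 1 / ((m : ℝ) + 1 + n) := Finset.sum_range_sub' _ n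
      _ = 1 / ((m : ℝ) + 1) - 1 / ((m : ℝ) + 1 + n) := by norm_num
  -- combine by partial fractions
  have key : HasSum (fun m : ℕ => (1 : ℝ) / (((m : ℝ) + 1) ^ 2 * (((m : ℝ) + 1) + n) ^ 2))
      (Real.pi ^ 2 / (3 * (n : ℝ) ^ 2)
        - (∑ k ∈ range n, (1 : ℝ) / ((k : ℝ) + 1) ^ 2) / (n : ℝ) ^ 2
        - 2 * (∑ j ∈ range n, (1 : ℝ) / ((j : ℝ) + 1)) / (n : ℝ) ^ 3) := by
    have h := ((aux_ha.add hb).mul_left (1 / (n : ℝ) ^ 2)).sub (hC.mul_left (2 / (n : ℝ) ^ 3))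
    convert h using 1
    · exact rfl
    · funext m
      have h1 : (0 : ℝ) < (m : ℝ) + 1 := by positivity
      have h2 : (0 : ℝ) < (m : ℝ) + 1 + n := by positivity
      have e : ((m : ℝ) + 1) + n = (m : ℝ) + 1 + n := rfl
      rw [e]
      field_simp
      ring
    · field_simp
      ring
  exact key.tsum_eq
end

section
/- Q_n(-1) = (-1)^n p_DO(n), where p_DO(n) is the number of partitions of n into distinct odd parts. -/
namespace Stmt11

/-- `Q lam k`: `k` is a "bad" even number for `lam`: either `k` occurs with odd
multiplicity, or `k/2` occurs at least twice. -/
def Q {n : ℕ} (lam : Nat.Partition n) (k : ℕ) : Prop :=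
  k % 2 = 0 ∧ 0 < k ∧
    (Multiset.count k lam.parts % 2 = 1 ∨ 2 ≤ Multiset.count (k / 2) lam.parts)

instance {n : ℕ} (lam : Nat.Partition n) : DecidablePred (Q lam) := fun _ => by
  unfold Q; infer_instance

lemma exQ_iff {n : ℕ} (lam : Nat.Partition n) :
    (∃ k, Q lam k) ↔ ¬ (lam.parts.Nodup ∧ ∀ i ∈ lam.parts, Odd i) := by
  constructor
  · rintro ⟨k, hk2, hk0, hk⟩ ⟨hnd, hodd⟩
    rcases hk with h1 | h2
    · have hmem : k ∈ lam.parts := by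
        rw [← Multiset.count_pos]; omega
      have := hodd k hmem
      rw [Nat.odd_iff] at this; omega
    · have := (Multiset.nodup_iff_count_le_one.mp hnd) (k / 2)
      omega
  · intro h
    rw [not_and_or] at h
    rcases h with h | h
    · rw [Multiset.nodup_iff_count_le_one] at h
      push_neg at h
      obtain ⟨j, hj⟩ := h
      have hj2 : 2 ≤ Multiset.count j lam.parts := hj
      have hjmem : j ∈ lam.parts := by rw [← Multiset.count_pos]; omega
      have hjpos := lam.parts_pos hjmem
      refine ⟨2 * j, by omega, by omega, Or.inr ?_⟩
      have h2j : (2 * j) / 2 = j := by omega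
      rw [h2j]; exact hj2
    · push_neg at h
      obtain ⟨j, hjmem, hje⟩ := h
      rw [Nat.not_odd_iff_even, Nat.even_iff] at hje
      have hjpos := lam.parts_pos hjmem
      have hjc : 1 ≤ Multiset.count j lam.parts :=
        Multiset.one_le_count_iff_mem.mpr hjmem
      by_cases hc : Multiset.count j lam.parts % 2 = 1
      · exact ⟨j, hje, hjpos, Or.inl hc⟩
      · refine ⟨2 * j, by omega, by omega, Or.inr ?_⟩
        have h2j : (2 * j) / 2 = j := by omega
        rw [h2j]; omega

open scoped Classical in
/-- The sign-reversing involution: at `e` = least bad even number, either split one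
copy of `e` into two copies of `e/2`, or merge two copies of `e/2` into one `e`. -/
noncomputable def tog {n : ℕ} (lam : Nat.Partition n) : Nat.Partition n :=
  if h : ∃ k, Q lam k then
    if hodd : Multiset.count (Nat.find h) lam.parts % 2 = 1 then
      { parts := lam.parts.erase (Nat.find h) + Multiset.replicate 2 (Nat.find h / 2)
        parts_pos := by
          obtain ⟨he2, he0, -⟩ := Nat.find_spec h
          intro i hi
          rcases Multiset.mem_add.mp hi with hi | hi
          · exact lam.parts_pos (Multiset.mem_of_mem_erase hi)
          · rw [Multiset.eq_of_mem_replicate hi]; omega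
        parts_sum := by
          obtain ⟨he2, he0, -⟩ := Nat.find_spec h
          have hmem : Nat.find h ∈ lam.parts := by
            rw [← Multiset.count_pos]; omega
          have h2 : (Nat.find h ::ₘ lam.parts.erase (Nat.find h)).sum = lam.parts.sum := by
            rw [Multiset.cons_erase hmem]
          rw [Multiset.sum_cons] at h2
          have h3 := lam.parts_sum
          rw [Multiset.sum_add, Multiset.sum_replicate, smul_eq_mul]
          omega }
    else
      { parts := lam.parts - Multiset.replicate 2 (Nat.find h / 2) + {Nat.find h}
        parts_pos := by
          obtain ⟨he2, he0, -⟩ := Nat.find_spec h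
          intro i hi
          rcases Multiset.mem_add.mp hi with hi | hi
          · exact lam.parts_pos (Multiset.mem_of_le (tsub_le_self) hi)
          · rw [Multiset.mem_singleton.mp hi]; omega
        parts_sum := by
          obtain ⟨he2, he0, hor⟩ := Nat.find_spec h
          have hc2 : 2 ≤ Multiset.count (Nat.find h / 2) lam.parts := by
            rcases hor with h1 | h1
            · exact absurd h1 hodd
            · exact h1
          have hr : Multiset.replicate 2 (Nat.find h / 2) ≤ lam.parts :=
            Multiset.le_count_iff_replicate_le.mp hc2
          have h1 := tsub_add_cancel_of_le hr
          have h2 : (lam.parts - Multiset.replicate 2 (Nat.find h / 2)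
              + Multiset.replicate 2 (Nat.find h / 2)).sum = lam.parts.sum := by rw [h1]
          rw [Multiset.sum_add, Multiset.sum_replicate, smul_eq_mul] at h2
          have h3 := lam.parts_sum
          rw [Multiset.sum_add, Multiset.sum_singleton]
          omega }
  else lam

lemma tog_parts_A {n : ℕ} (lam : Nat.Partition n) (h : ∃ k, Q lam k)
    (hodd : Multiset.count (Nat.find h) lam.parts % 2 = 1) :
    (tog lam).parts
      = lam.parts.erase (Nat.find h) + Multiset.replicate 2 (Nat.find h / 2) := by
  rw [tog, dif_pos h, dif_pos hodd]

lemma tog_parts_B {n : ℕ} (lam : Nat.Partition n) (h : ∃ k, Q lam k)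
    (hodd : ¬ Multiset.count (Nat.find h) lam.parts % 2 = 1) :
    (tog lam).parts
      = lam.parts - Multiset.replicate 2 (Nat.find h / 2) + {Nat.find h} := by
  rw [tog, dif_pos h, dif_neg hodd]

lemma tog_key {n : ℕ} (lam : Nat.Partition n) (h : ∃ k, Q lam k) :
    (∃ k, Q (tog lam) k) ∧ tog (tog lam) = lam ∧
      (-1 : ℤ) ^ (tog lam).parts.card = - (-1) ^ lam.parts.card := by
  obtain ⟨he2, he0, hor⟩ := Nat.find_spec h
  set e := Nat.find h with hedef
  have hee : e ≠ e / 2 := by omega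
  have hee' : e / 2 ≠ e := Ne.symm hee
  have hhalfpos : 0 < e / 2 := by omega
  by_cases hodd : Multiset.count e lam.parts % 2 = 1
  · -- split case
    have hmem : e ∈ lam.parts := by rw [← Multiset.count_pos]; omega
    have hp := tog_parts_A lam h (hedef ▸ hodd)
    rw [← hedef] at hp
    have cE : Multiset.count e (tog lam).parts = Multiset.count e lam.parts - 1 := by
      rw [hp, Multiset.count_add, Multiset.count_erase_self,
        Multiset.count_replicate, if_neg hee', add_zero]
    have cH : Multiset.count (e / 2) (tog lam).parts
        = Multiset.count (e / 2) lam.parts + 2 := by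
      rw [hp, Multiset.count_add, Multiset.count_erase_of_ne hee',
        Multiset.count_replicate, if_pos rfl]
    have cO : ∀ k, k ≠ e → k ≠ e / 2 →
        Multiset.count k (tog lam).parts = Multiset.count k lam.parts := by
      intro k hk1 hk2
      rw [hp, Multiset.count_add, Multiset.count_erase_of_ne hk1,
        Multiset.count_replicate, if_neg (Ne.symm hk2), add_zero]
    have hQe : Q (tog lam) e := ⟨he2, he0, Or.inr (by omega)⟩
    have hmin : ∀ m, m < e → ¬ Q (tog lam) m := by
      rintro m hm ⟨hm2, hm0, hmor⟩
      have hnot := Nat.find_min h (show m < Nat.find h from hedef ▸ hm)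
      have h1 : ¬ (Multiset.count m lam.parts % 2 = 1
          ∨ 2 ≤ Multiset.count (m / 2) lam.parts) := fun hc => hnot ⟨hm2, hm0, hc⟩
      push_neg at h1
      obtain ⟨h1a, h1b⟩ := h1
      have hmne : m ≠ e := by omega
      have hm2e : m / 2 ≠ e := by omega
      have hm2h : m / 2 ≠ e / 2 := by omega
      have cm : Multiset.count m (tog lam).parts % 2 = 0 := by
        by_cases hmh : m = e / 2
        · rw [hmh, cH]; subst hmh; omega
        · rw [cO m hmne hmh]; omega
      have cm2 : Multiset.count (m / 2) (tog lam).parts ≤ 1 := by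
        rw [cO _ hm2e hm2h]; omega
      omega
    have h' : ∃ k, Q (tog lam) k := ⟨e, hQe⟩
    have hfind' : Nat.find h' = e :=
      (Nat.find_eq_iff h').mpr ⟨hQe, fun m hm => hmin m hm⟩
    have hsel : ¬ Multiset.count (Nat.find h') (tog lam).parts % 2 = 1 := by
      rw [hfind', cE]; omega
    have hp2 := tog_parts_B (tog lam) h' hsel
    rw [hfind'] at hp2
    have hparts : (tog (tog lam)).parts = lam.parts := by
      rw [hp2, hp, add_tsub_cancel_right, add_comm, Multiset.singleton_add,
        Multiset.cons_erase hmem]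
    have hcard1 : 1 ≤ Multiset.card lam.parts :=
      Multiset.card_pos_iff_exists_mem.mpr ⟨e, hmem⟩
    have hcard : Multiset.card (tog lam).parts = Multiset.card lam.parts + 1 := by
      rw [hp, Multiset.card_add, Multiset.card_erase_of_mem hmem,
        Multiset.card_replicate, Nat.pred_eq_sub_one]
      omega
    refine ⟨h', Nat.Partition.ext hparts, ?_⟩
    rw [hcard, pow_succ]; ring
  · -- merge case
    have hc2 : 2 ≤ Multiset.count (e / 2) lam.parts := by
      rcases hor with h1 | h1
      · exact absurd h1 hodd
      · exact h1
    have hr : Multiset.replicate 2 (e / 2) ≤ lam.parts :=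
      Multiset.le_count_iff_replicate_le.mp hc2
    have hp := tog_parts_B lam h (hedef ▸ hodd)
    rw [← hedef] at hp
    have cE : Multiset.count e (tog lam).parts = Multiset.count e lam.parts + 1 := by
      rw [hp, Multiset.count_add, Multiset.count_sub, Multiset.count_replicate,
        if_neg hee', Multiset.count_singleton, if_pos rfl, Nat.sub_zero]
    have cH : Multiset.count (e / 2) (tog lam).parts
        = Multiset.count (e / 2) lam.parts - 2 := by
      rw [hp, Multiset.count_add, Multiset.count_sub, Multiset.count_replicate,
        if_pos rfl, Multiset.count_singleton, if_neg hee', add_zero]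
    have cO : ∀ k, k ≠ e → k ≠ e / 2 →
        Multiset.count k (tog lam).parts = Multiset.count k lam.parts := by
      intro k hk1 hk2
      rw [hp, Multiset.count_add, Multiset.count_sub, Multiset.count_replicate,
        if_neg (Ne.symm hk2), Multiset.count_singleton, if_neg hk1, add_zero,
        Nat.sub_zero]
    have hQe : Q (tog lam) e := ⟨he2, he0, Or.inl (by omega)⟩
    have hmin : ∀ m, m < e → ¬ Q (tog lam) m := by
      rintro m hm ⟨hm2, hm0, hmor⟩
      have hnot := Nat.find_min h (show m < Nat.find h from hedef ▸ hm)
      have h1 : ¬ (Multiset.count m lam.parts % 2 = 1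
          ∨ 2 ≤ Multiset.count (m / 2) lam.parts) := fun hc => hnot ⟨hm2, hm0, hc⟩
      push_neg at h1
      obtain ⟨h1a, h1b⟩ := h1
      have hmne : m ≠ e := by omega
      have hm2e : m / 2 ≠ e := by omega
      have hm2h : m / 2 ≠ e / 2 := by omega
      have cm : Multiset.count m (tog lam).parts % 2 = 0 := by
        by_cases hmh : m = e / 2
        · rw [hmh, cH]; subst hmh; omega
        · rw [cO m hmne hmh]; omega
      have cm2 : Multiset.count (m / 2) (tog lam).parts ≤ 1 := by
        rw [cO _ hm2e hm2h]; omega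
      omega
    have h' : ∃ k, Q (tog lam) k := ⟨e, hQe⟩
    have hfind' : Nat.find h' = e :=
      (Nat.find_eq_iff h').mpr ⟨hQe, fun m hm => hmin m hm⟩
    have hsel : Multiset.count (Nat.find h') (tog lam).parts % 2 = 1 := by
      rw [hfind', cE]; omega
    have hp2 := tog_parts_A (tog lam) h' hsel
    rw [hfind'] at hp2
    have hparts : (tog (tog lam)).parts = lam.parts := by
      rw [hp2, hp, add_comm (lam.parts - Multiset.replicate 2 (e / 2)) {e},
        Multiset.singleton_add, Multiset.erase_cons_head,
        tsub_add_cancel_of_le hr]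
    have hcard2 : 2 ≤ Multiset.card lam.parts := by
      have := Multiset.card_le_card hr
      rw [Multiset.card_replicate] at this; exact this
    have hcard : Multiset.card (tog lam).parts + 1 = Multiset.card lam.parts := by
      rw [hp, Multiset.card_add, Multiset.card_sub hr, Multiset.card_replicate,
        Multiset.card_singleton]
      omega
    refine ⟨h', Nat.Partition.ext hparts, ?_⟩
    have hc : (-1 : ℤ) ^ Multiset.card lam.parts
        = (-1) ^ (Multiset.card (tog lam).parts + 1) := by rw [hcard]
    rw [hc, pow_succ]; ring

lemma neg_one_pow_card {m : Multiset ℕ} (h : ∀ i ∈ m, Odd i) :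
    (-1 : ℤ) ^ Multiset.card m = (-1) ^ m.sum := by
  induction m using Multiset.induction_on with
  | empty => simp
  | cons a s ih =>
    have ha : Odd a := h a (Multiset.mem_cons_self a s)
    have ih' := ih (fun i hi => h i (Multiset.mem_cons_of_mem hi))
    rw [Multiset.card_cons, Multiset.sum_cons, pow_succ, pow_add, ih', ha.neg_one_pow]
    ring

end Stmt11

/-- `Q_n(-1) = (-1)ⁿ p_DO(n)` where `p_DO(n)` counts partitions of `n`
into distinct odd parts. -/
theorem stmt11 (n : ℕ) :
    (∑ lam : Nat.Partition n, (-1 : ℤ) ^ lam.parts.card)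
      = (-1) ^ n * ((Finset.univ.filter
          (fun lam : Nat.Partition n =>
            lam.parts.Nodup ∧ ∀ i ∈ lam.parts, Odd i)).card : ℤ) := by
  classical
  rw [← Finset.sum_filter_add_sum_filter_not Finset.univ
    (fun lam : Nat.Partition n => lam.parts.Nodup ∧ ∀ i ∈ lam.parts, Odd i)
    (fun lam => (-1 : ℤ) ^ lam.parts.card)]
  have h1 : ∑ lam ∈ Finset.univ.filter
      (fun lam : Nat.Partition n => lam.parts.Nodup ∧ ∀ i ∈ lam.parts, Odd i),
      (-1 : ℤ) ^ lam.parts.card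
      = (-1) ^ n * ((Finset.univ.filter
          (fun lam : Nat.Partition n =>
            lam.parts.Nodup ∧ ∀ i ∈ lam.parts, Odd i)).card : ℤ) := by
    rw [Finset.sum_congr rfl (fun lam hlam => ?_), Finset.sum_const, nsmul_eq_mul, mul_comm]
    have hmem := Finset.mem_filter.mp hlam
    rw [Stmt11.neg_one_pow_card hmem.2.2, lam.parts_sum]
  have h2 : ∑ lam ∈ Finset.univ.filter
      (fun lam : Nat.Partition n =>
        ¬(lam.parts.Nodup ∧ ∀ i ∈ lam.parts, Odd i)),
      (-1 : ℤ) ^ lam.parts.card = 0 := by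
    apply Finset.sum_involution (fun lam _ => Stmt11.tog lam)
    · intro lam hlam
      have hbad : ∃ k, Stmt11.Q lam k :=
        (Stmt11.exQ_iff lam).mpr (Finset.mem_filter.mp hlam).2
      have := (Stmt11.tog_key lam hbad).2.2
      rw [this]; ring
    · intro lam hlam _
      have hbad : ∃ k, Stmt11.Q lam k :=
        (Stmt11.exQ_iff lam).mpr (Finset.mem_filter.mp hlam).2
      have hne := (Stmt11.tog_key lam hbad).2.2
      intro heq
      rw [heq] at hne
      have hz : (-1 : ℤ) ^ Multiset.card lam.parts = 0 := by linarith
      exact pow_ne_zero _ (by norm_num) hz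
    · intro lam hlam
      have hbad : ∃ k, Stmt11.Q lam k :=
        (Stmt11.exQ_iff lam).mpr (Finset.mem_filter.mp hlam).2
      have := (Stmt11.tog_key lam hbad).1
      simp only [Finset.mem_filter, Finset.mem_univ, true_and]
      exact (Stmt11.exQ_iff _).mp this
    · intro lam hlam
      have hbad : ∃ k, Stmt11.Q lam k :=
        (Stmt11.exQ_iff lam).mpr (Finset.mem_filter.mp hlam).2
      exact (Stmt11.tog_key lam hbad).2.1
  rw [h1, h2, add_zero]
end
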